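/- arXiv:2109.01080 — 5 statements merged into one kernel-verified Lean document; each statement's English description precedes it below -/
import Mathlib

section
/- Let λ ∈ ℝⁿ, let D = diag(λ) be the n×n real diagonal matrix with diagonal λ, and let U be any n×n unitary matrix. Then the diagonal vector of U D U*, i.e. the vector ((U D U*)₁₁, …, (U D U*)ₙₙ) ∈ ℝⁿ (these diagonal entries are real since U D U* is Hermitian), lies in the permutation polytope P_λ, the convex hull of the set { (λ_{σ(1)}, …, λ_{σ(n)}) : σ ∈ Sₙ } of all permutations of λ. -/
open Matrix

/-- Schur's part of the Schur–Horn theorem: the diagonal of `U D U*`, where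
`D = diag(λ)` is real diagonal and `U` is unitary, lies in the permutation
polytope of `λ` (the convex hull of all permutations of `λ`). -/
theorem diag_unitary_conj_mem_permutation_polytope
    (n : ℕ) (lam : Fin n → ℝ) (U : Matrix (Fin n) (Fin n) ℂ)
    (hU : U ∈ Matrix.unitaryGroup (Fin n) ℂ) :
    (fun i => ((U * Matrix.diagonal (fun j => (lam j : ℂ)) * Uᴴ) i i).re)
      ∈ convexHull ℝ {v : Fin n → ℝ | ∃ σ : Equiv.Perm (Fin n), v = lam ∘ σ} := by
  classical
  set M : Matrix (Fin n) (Fin n) ℝ := fun i j => Complex.normSq (U i j) with hMdef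
  have hUU : U * Uᴴ = 1 := Matrix.mem_unitaryGroup_iff.mp hU
  have hU'U : Uᴴ * U = 1 := Matrix.mem_unitaryGroup_iff'.mp hU
  have hM : M ∈ doublyStochastic ℝ (Fin n) := by
    rw [mem_doublyStochastic_iff_sum]
    refine ⟨fun i j => Complex.normSq_nonneg _, fun i => ?_, fun j => ?_⟩
    · have h := congrArg (fun A => (A i i).re) hUU
      simpa [Matrix.mul_apply, Matrix.conjTranspose_apply, Matrix.one_apply,
        Complex.mul_conj, ← Complex.ofReal_sum] using h
    · have h := congrArg (fun A => (A j j).re) hU'U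
      simpa [Matrix.mul_apply, Matrix.conjTranspose_apply, Matrix.one_apply,
        mul_comm, Complex.mul_conj, ← Complex.ofReal_sum] using h
  obtain ⟨w, hw0, hw1, hw2⟩ := exists_eq_sum_perm_of_mem_doublyStochastic hM
  refine mem_convexHull_of_exists_fintype w (fun σ => lam ∘ σ) hw0 hw1
    (fun σ => ⟨σ, rfl⟩) ?_
  funext i
  have hdiag : ((U * Matrix.diagonal (fun j => (lam j : ℂ)) * Uᴴ) i i).re
      = ∑ j, M i j * lam j := by
    simp only [Matrix.mul_apply, Matrix.diagonal_apply, mul_ite, mul_zero,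
      Finset.sum_ite_eq', Finset.mem_univ, if_true, Matrix.conjTranspose_apply]
    rw [Complex.re_sum]
    refine Finset.sum_congr rfl fun j _ => ?_
    rw [mul_right_comm]
    simp [hMdef, Complex.star_def, Complex.mul_conj, ← Complex.ofReal_mul]
  have hMij : ∀ j, M i j = ∑ σ : Equiv.Perm (Fin n), w σ * (σ.permMatrix ℝ) i j := by
    intro j
    have := congrArg (fun A => A i j) hw2
    simpa [Matrix.sum_apply, Matrix.smul_apply, smul_eq_mul] using this.symm
  simp only [Finset.sum_apply, Pi.smul_apply, Function.comp_apply, smul_eq_mul]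
  rw [hdiag]
  simp only [hMij, Finset.sum_mul, Equiv.Perm.permMatrix, PEquiv.toMatrix_apply,
    Equiv.toPEquiv_apply, Option.mem_def, Option.some.injEq]
  rw [Finset.sum_comm]
  refine Finset.sum_congr rfl fun σ _ => ?_
  simp [eq_comm, mul_ite, Finset.sum_ite_eq]
end

section
/- Let λ ∈ ℝⁿ and let D = diag(λ). For every vector v in the permutation polytope P_λ (the convex hull of all permutations of λ), there exists an n×n unitary matrix U such that the diagonal of U D U* equals v, i.e. (U D U*)ᵢᵢ = vᵢ for all i = 1,…,n. -/
/-!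
Horn's induction. Majorization `v ≺ λ` is expressed through the functions
`t ↦ ∑ⱼ (xⱼ - t)⁺`, in which form it is preserved by convex combinations and hence holds on the
whole permutation polytope of `λ`. Given `v ≺ λ`, let `m = max v` and pick entries
`λ l ≤ m ≤ λ k` with no entry of `λ` strictly between them. A rotation in the `(k, l)`-plane
conjugates `diag λ` into a matrix with `m` at `(k, k)` whose block off `k` is diagonal, with `λ l`
replaced by `λ k + λ l - m`. The remaining entries of `v` are majorized by the remaining entries of
this new diagonal, so the induction hypothesis, applied through `V ⊕ 1`, finishes the proof.
-/

open Matrix Finset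

namespace Matrix

section PlaneRotation

variable {ι : Type*} [DecidableEq ι]

def planeRotation (k l : ι) (c s : ℝ) : Matrix ι ι ℂ := of fun p q =>
  if p = k then (if q = k then c else if q = l then -s else 0)
  else if p = l then (if q = k then s else if q = l then c else 0)
  else if p = q then 1 else 0

variable {k l : ι} {c s : ℝ}

lemma planeRotation_apply_of_row_ne {p : ι} (hpk : p ≠ k) (hpl : p ≠ l) (r : ι) :
    planeRotation k l c s p r = if p = r then 1 else 0 := by
  simp [planeRotation, hpk, hpl]

lemma planeRotation_apply_of_col_ne {r : ι} (hrk : r ≠ k) (hrl : r ≠ l) (p : ι) :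
    planeRotation k l c s p r = if p = r then 1 else 0 := by
  by_cases hp : p = k ∨ p = l
  · rcases hp with rfl | rfl <;> simp [planeRotation, hrk, hrl, hrk.symm, hrl.symm]
  · push Not at hp
    exact planeRotation_apply_of_row_ne hp.1 hp.2 r

lemma star_planeRotation_apply (p r : ι) :
    star (planeRotation k l c s p r) = planeRotation k l c s p r := by
  simp only [planeRotation, of_apply]
  split_ifs <;> simp

lemma planeRotation_conj_diagonal_apply [Fintype ι] (hkl : k ≠ l) (d : ι → ℂ) (p q : ι) :
    (planeRotation k l c s * diagonal d * (planeRotation k l c s)ᴴ) p q =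
      if p = k ∧ q = k then c * c * d k + s * s * d l
      else if p = l ∧ q = l then s * s * d k + c * c * d l
      else if p = k ∧ q = l ∨ p = l ∧ q = k then c * s * (d k - d l)
      else diagonal d p q := by
  rw [mul_apply]
  simp only [mul_diagonal, conjTranspose_apply, star_planeRotation_apply]
  by_cases hp : p = k ∨ p = l
  · by_cases hq : q = k ∨ q = l
    · rw [Fintype.sum_eq_add k l hkl fun r hr => by
        have : p ≠ r := fun h => (not_or.2 hr) (h ▸ hp)
        simp [planeRotation_apply_of_col_ne hr.1 hr.2, this]]
      rcases hp with rfl | rfl <;> rcases hq with rfl | rfl <;>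
        simp [planeRotation, hkl, hkl.symm] <;> ring
    · have hpq : p ≠ q := fun h => hq (h ▸ hp)
      push Not at hq
      rw [Fintype.sum_eq_single q fun r hr => by
        simp [planeRotation_apply_of_row_ne hq.1 hq.2, Ne.symm hr]]
      simp [planeRotation_apply_of_col_ne hq.1 hq.2, hpq, hq.1, hq.2]
  · push Not at hp
    rw [Fintype.sum_eq_single p fun r hr => by
      simp [planeRotation_apply_of_row_ne hp.1 hp.2, Ne.symm hr]]
    simp [planeRotation_apply_of_col_ne hp.1 hp.2, hp.1, hp.2, diagonal, eq_comm]

lemma planeRotation_mem_unitaryGroup [Fintype ι] (hkl : k ≠ l) (hcs : c * c + s * s = 1) :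
    planeRotation k l c s ∈ unitaryGroup ι ℂ := by
  have hcs' : (c : ℂ) * c + s * s = 1 := by exact_mod_cast hcs
  rw [mem_unitaryGroup_iff, star_eq_conjTranspose]
  ext p q
  have h := planeRotation_conj_diagonal_apply (c := c) (s := s) hkl (fun _ => 1) p q
  rw [diagonal_one, Matrix.mul_one] at h
  rw [h]
  split_ifs with h₁ h₂ h₃
  · rw [h₁.1, h₁.2]
    simp [hcs']
  · rw [h₂.1, h₂.2]
    simp [add_comm _ ((c : ℂ) * c), hcs']
  · rcases h₃ with ⟨rfl, rfl⟩ | ⟨rfl, rfl⟩ <;> simp [hkl, hkl.symm]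
  · rfl

end PlaneRotation

section ExtendByOne

variable {ι α : Type*} [Fintype ι] [DecidableEq ι] [CommRing α] [StarRing α]
  {p : ι → Prop} [DecidablePred p]

def extendByOne (V : Matrix {i // p i} {i // p i} α) : Matrix ι ι α :=
  (fromBlocks V 0 0 1).submatrix (Equiv.sumCompl p).symm (Equiv.sumCompl p).symm

lemma extendByOne_mem_unitaryGroup {V : Matrix {i // p i} {i // p i} α}
    (hV : V ∈ unitaryGroup {i // p i} α) : extendByOne V ∈ unitaryGroup ι α := by
  rw [mem_unitaryGroup_iff, star_eq_conjTranspose] at hV ⊢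
  rw [extendByOne, conjTranspose_submatrix, submatrix_mul_equiv, fromBlocks_conjTranspose,
    fromBlocks_multiply]
  simp [hV, fromBlocks_one]

lemma extendByOne_conj (V : Matrix {i // p i} {i // p i} α) (A : Matrix ι ι α) :
    extendByOne V * A * (extendByOne V)ᴴ =
      (fromBlocks (V * A.toBlock p p * Vᴴ) (V * A.toBlock p (¬p ·))
        (A.toBlock (¬p ·) p * Vᴴ) (A.toBlock (¬p ·) (¬p ·))).submatrix
        (Equiv.sumCompl p).symm (Equiv.sumCompl p).symm := by
  have hA : A = (fromBlocks (A.toBlock p p) (A.toBlock p (¬p ·)) (A.toBlock (¬p ·) p)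
      (A.toBlock (¬p ·) (¬p ·))).submatrix (Equiv.sumCompl p).symm (Equiv.sumCompl p).symm := by
    ext i j
    by_cases hi : p i <;> by_cases hj : p j <;> simp [hi, hj, toBlock_apply]
  conv_lhs => rw [hA]
  rw [extendByOne, conjTranspose_submatrix, submatrix_mul_equiv, submatrix_mul_equiv,
    fromBlocks_conjTranspose, fromBlocks_multiply, fromBlocks_multiply]
  simp [Matrix.mul_assoc]

lemma extendByOne_conj_apply_of_not (V : Matrix {i // p i} {i // p i} α) (A : Matrix ι ι α)
    {i : ι} (hi : ¬p i) : (extendByOne V * A * (extendByOne V)ᴴ) i i = A i i := by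
  simp [extendByOne_conj, hi, toBlock_apply]

lemma extendByOne_conj_apply (V : Matrix {i // p i} {i // p i} α) (A : Matrix ι ι α)
    (i j : {i // p i}) :
    (extendByOne V * A * (extendByOne V)ᴴ) i j = (V * A.toBlock p p * Vᴴ) i j := by
  simp [extendByOne_conj, i.2, j.2]

end ExtendByOne

end Matrix

namespace SchurHorn

section Majorization

variable {ι : Type*} [Fintype ι]

noncomputable def excess (w : ι → ℝ) (t : ℝ) : ℝ := ∑ j, (w j - t)⁺

/-- Majorization in the Hardy–Littlewood–Pólya form, equivalent to the usual inequalities between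
partial sums of the decreasingly sorted entries. -/
structure IsMajorizedBy (v lam : ι → ℝ) : Prop where
  excess_le : ∀ t, excess v t ≤ excess lam t
  sum_eq : ∑ j, v j = ∑ j, lam j

lemma posPart_sub_le_excess (w : ι → ℝ) (t : ℝ) (j : ι) : (w j - t)⁺ ≤ excess w t :=
  single_le_sum (f := fun j => (w j - t)⁺) (fun _ _ => posPart_nonneg _) (mem_univ j)

lemma excess_comp_equiv (w : ι → ℝ) (σ : ι ≃ ι) (t : ℝ) : excess (w ∘ σ) t = excess w t :=
  σ.sum_comp fun j => (w j - t)⁺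

lemma excess_eq_sum_filter (w : ι → ℝ) (t : ℝ) :
    excess w t = ∑ j with t < w j, (w j - t) := by
  simp only [excess, sum_filter, posPart_eq_ite_lt, sub_pos]

lemma excess_eq_zero (w : ι → ℝ) {t : ℝ} (h : ∀ j, w j ≤ t) : excess w t = 0 :=
  sum_eq_zero fun j _ => posPart_eq_zero.2 (sub_nonpos.2 (h j))

lemma excess_subtype_ne [DecidableEq ι] (w : ι → ℝ) (k : ι) (t : ℝ) :
    excess (fun j : {j // j ≠ k} => w j) t = excess w t - (w k - t)⁺ := by
  rw [excess, excess, Fintype.sum_eq_add_sum_subtype_ne _ k]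
  ring

lemma sum_update [DecidableEq ι] (w : ι → ℝ) (k : ι) (r : ℝ) :
    ∑ j, Function.update w k r j = ∑ j, w j - w k + r := by
  rw [Fintype.sum_eq_add_sum_subtype_ne _ k, Fintype.sum_eq_add_sum_subtype_ne w k,
    Function.update_self, sum_congr rfl fun (j : {j // j ≠ k}) _ => Function.update_of_ne j.2 r w]
  ring

lemma excess_update [DecidableEq ι] (w : ι → ℝ) (k : ι) (r t : ℝ) :
    excess (Function.update w k r) t = excess w t - (w k - t)⁺ + (r - t)⁺ := by
  simp only [excess, Function.apply_update (fun _ x => (x - t)⁺), sum_update]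

lemma excess_smul_add_smul_le {x y : ι → ℝ} {a b : ℝ} (ha : 0 ≤ a) (hb : 0 ≤ b)
    (hab : a + b = 1) (t : ℝ) :
    excess (a • x + b • y) t ≤ a * excess x t + b * excess y t := by
  rw [excess, excess, excess, mul_sum, mul_sum, ← sum_add_distrib]
  refine sum_le_sum fun j _ => max_le ?_ (by positivity)
  have hx := le_posPart (x j - t)
  have hy := le_posPart (y j - t)
  have : (a • x + b • y) j - t = a * (x j - t) + b * (y j - t) := by
    simp only [Pi.add_apply, Pi.smul_apply, smul_eq_mul]
    linear_combination t * hab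
  rw [this]
  gcongr

lemma excess_add_card_mul_le (w : ι → ℝ) {s t : ℝ} (hst : s ≤ t) :
    excess w t + #{j | t < w j} * (t - s) ≤ excess w s := by
  calc excess w t + #{j | t < w j} * (t - s) = ∑ j with t < w j, (w j - s) := by
        rw [excess_eq_sum_filter, ← nsmul_eq_mul, ← sum_const, ← sum_add_distrib]
        exact sum_congr rfl fun _ _ => by ring
    _ ≤ ∑ j with s < w j, (w j - s) :=
        sum_le_sum_of_subset_of_nonneg (monotone_filter_right _ fun _ _ h => hst.trans_lt h)
          fun j hj _ => sub_nonneg.2 (mem_filter.1 hj).2.le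
    _ = excess w s := (excess_eq_sum_filter w s).symm

lemma excess_le_card_mul (w : ι → ℝ) {m : ℝ} (hw : ∀ j, w j ≤ m) (t : ℝ) :
    excess w t ≤ #{j | t < w j} * (m - t) := by
  rw [excess_eq_sum_filter, ← nsmul_eq_mul]
  exact sum_le_card_nsmul _ _ _ fun j _ => by linarith [hw j]

lemma excess_eq_sum_of_gap (w : ι → ℝ) {a b s : ℝ} (hgap : ∀ j, w j ≤ b ∨ a ≤ w j)
    (hbs : b ≤ s) (hsa : s < a) : excess w s = ∑ j with a ≤ w j, (w j - s) := by
  rw [excess_eq_sum_filter]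
  congr 1
  ext j
  simp only [mem_filter, mem_univ, true_and]
  rcases hgap j with h | h
  · constructor <;> intro h' <;> linarith
  · exact ⟨fun _ => h, fun _ => by linarith⟩

variable {v lam : ι → ℝ}

lemma convex_setOf_isMajorizedBy (lam : ι → ℝ) : Convex ℝ {v | IsMajorizedBy v lam} := by
  rintro x ⟨hx, hxs⟩ y ⟨hy, hys⟩ a b ha hb hab
  refine ⟨fun t => ?_, ?_⟩
  · calc excess (a • x + b • y) t ≤ a * excess x t + b * excess y t :=
          excess_smul_add_smul_le ha hb hab t
      _ ≤ a * excess lam t + b * excess lam t := by gcongr <;> [exact hx t; exact hy t]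
      _ = excess lam t := by linear_combination excess lam t * hab
  · simp only [Pi.add_apply, Pi.smul_apply, smul_eq_mul, sum_add_distrib, ← mul_sum, hxs, hys]
    linear_combination (∑ j, lam j) * hab

lemma IsMajorizedBy.comp_equiv (h : IsMajorizedBy v lam) (σ : ι ≃ ι) :
    IsMajorizedBy (v ∘ σ) lam :=
  ⟨fun t => (excess_comp_equiv v σ t).trans_le (h.excess_le t), (σ.sum_comp v).trans h.sum_eq⟩

lemma isMajorizedBy_of_mem_convexHull
    (hv : v ∈ convexHull ℝ {w | ∃ σ : Equiv.Perm ι, w = lam ∘ σ}) : IsMajorizedBy v lam := by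
  refine convexHull_min ?_ (convex_setOf_isMajorizedBy lam) hv
  rintro _ ⟨σ, rfl⟩
  exact IsMajorizedBy.comp_equiv ⟨fun _ => le_rfl, rfl⟩ σ

variable {k : ι} {m b : ℝ}

lemma min_le_excess_sub_excess (hmaj : ∀ t, excess v t ≤ excess lam t) (hv : ∀ j, v j ≤ m)
    (hgap : ∀ j, lam j ≤ b ∨ lam k ≤ lam j) (hmk : m ≤ lam k) {t : ℝ} (hbt : b < t)
    (htm : t < m) : min (t - b) (lam k - m) ≤ excess lam t - excess v t := by
  set c : ℕ := #{j | lam k ≤ lam j}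
  have hc : (1 : ℝ) ≤ c := by exact_mod_cast card_pos.2 ⟨k, by simp⟩
  have hlam_t := excess_eq_sum_of_gap lam hgap hbt.le (htm.trans_le hmk)
  have hlam_b := excess_eq_sum_of_gap lam hgap le_rfl (hbt.trans (htm.trans_le hmk))
  -- If at most `c` entries of `v` exceed `t`, compare the two sides at `t` directly; otherwise
  -- `excess v` falls faster than `excess lam` on `[b, t]`, and the comparison is made at `b`.
  rcases le_or_gt #{j | t < v j} c with hN | hN
  · have hv_t : excess v t ≤ c * (m - t) := (excess_le_card_mul v hv t).trans (by gcongr)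
    have hlam_t' : c * (lam k - t) ≤ excess lam t := by
      rw [hlam_t, ← nsmul_eq_mul]
      exact card_nsmul_le_sum _ _ _ fun j hj => by linarith [(mem_filter.1 hj).2]
    exact (min_le_right _ _).trans (by nlinarith)
  · have hlam_bt : excess lam b = excess lam t + c * (t - b) := by
      rw [hlam_t, hlam_b, ← nsmul_eq_mul, ← sum_const, ← sum_add_distrib]
      exact sum_congr rfl fun _ _ => by ring
    have hv_bt := excess_add_card_mul_le v hbt.le
    have : (c : ℝ) + 1 ≤ #{j | t < v j} := by exact_mod_cast hN
    exact (min_le_left _ _).trans (by nlinarith [hmaj b])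

/-- The left-hand side is a trapezoid in `t`, vanishing outside `(b, lam k)`. -/
lemma trapezoid_le_excess_sub_excess (hmaj : ∀ t, excess v t ≤ excess lam t)
    (hv : ∀ j, v j ≤ m) (hgap : ∀ j, lam j ≤ b ∨ lam k ≤ lam j) (hbm : b ≤ m) (hmk : m ≤ lam k)
    (t : ℝ) :
    (lam k - t)⁺ + (b - t)⁺ - (m - t)⁺ - (lam k + b - m - t)⁺ ≤ excess lam t - excess v t := by
  rcases le_or_gt t b with htb | hbt
  · rw [posPart_eq_self.2 (by linarith : 0 ≤ lam k - t),
      posPart_eq_self.2 (by linarith : 0 ≤ b - t), posPart_eq_self.2 (by linarith : 0 ≤ m - t),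
      posPart_eq_self.2 (by linarith : 0 ≤ lam k + b - m - t)]
    linarith [hmaj t]
  rcases le_or_gt m t with hmt | htm
  · rw [excess_eq_zero v fun j => (hv j).trans hmt, posPart_eq_zero.2 (by linarith : b - t ≤ 0),
      posPart_eq_zero.2 (by linarith : m - t ≤ 0)]
    linarith [posPart_sub_le_excess lam t k, posPart_nonneg (lam k + b - m - t)]
  · rw [posPart_eq_self.2 (by linarith : 0 ≤ lam k - t),
      posPart_eq_zero.2 (by linarith : b - t ≤ 0), posPart_eq_self.2 (by linarith : 0 ≤ m - t)]
    calc _ ≤ min (t - b) (lam k - m) :=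
          le_min (by linarith [le_posPart (lam k + b - m - t)])
            (by linarith [posPart_nonneg (lam k + b - m - t)])
      _ ≤ _ := min_le_excess_sub_excess hmaj hv hgap hmk hbt htm

lemma IsMajorizedBy.subtype_ne_update [DecidableEq ι] (h : IsMajorizedBy v lam) {l : ι}
    (hlk : l ≠ k) (hv : ∀ j, v j ≤ v k) (hgap : ∀ j, lam j ≤ lam l ∨ lam k ≤ lam j)
    (hl : lam l ≤ v k) (hk : v k ≤ lam k) :
    IsMajorizedBy (fun j : {j // j ≠ k} => v j)
      (fun j : {j // j ≠ k} => Function.update lam l (lam k + lam l - v k) j) := by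
  constructor
  · intro t
    rw [excess_subtype_ne, excess_subtype_ne, excess_update, Function.update_of_ne hlk.symm]
    linarith [trapezoid_le_excess_sub_excess h.excess_le hv hgap hl hk t]
  · have hv_sum := Fintype.sum_eq_add_sum_subtype_ne v k
    have hlam_sum :=
      Fintype.sum_eq_add_sum_subtype_ne (Function.update lam l (lam k + lam l - v k)) k
    rw [sum_update, Function.update_of_ne hlk.symm] at hlam_sum
    linarith [h.sum_eq]

lemma IsMajorizedBy.exists_le (h : IsMajorizedBy v lam) (i : ι) : ∃ j, v i ≤ lam j := by
  by_contra! hlt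
  have : Nonempty ι := ⟨i⟩
  obtain ⟨j₀, hj₀⟩ := Finite.exists_max lam
  have := h.excess_le (lam j₀)
  rw [excess_eq_zero lam hj₀] at this
  linarith [posPart_sub_le_excess v (lam j₀) i, le_posPart (v i - lam j₀), hlt j₀]

lemma IsMajorizedBy.exists_ne_le [DecidableEq ι] [Nontrivial ι] (h : IsMajorizedBy v lam)
    {i : ι} (hi : ∀ j, v j ≤ v i) (hk : v i ≤ lam k) : ∃ l ≠ k, lam l ≤ v i := by
  by_contra! hlt
  obtain ⟨j, hj⟩ := exists_ne k
  have hsum_lt : ∑ j : {j // j ≠ k}, v j < ∑ j : {j // j ≠ k}, lam j :=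
    sum_lt_sum (fun j _ => (hi j).trans (hlt j j.2).le)
      ⟨⟨j, hj⟩, mem_univ _, (hi j).trans_lt (hlt j hj)⟩
  have hsum := h.sum_eq
  rw [Fintype.sum_eq_add_sum_subtype_ne v k, Fintype.sum_eq_add_sum_subtype_ne lam k] at hsum
  linarith [hi k]

lemma IsMajorizedBy.exists_bracket [DecidableEq ι] [Nontrivial ι] (h : IsMajorizedBy v lam)
    {i : ι} (hi : ∀ j, v j ≤ v i) :
    ∃ k l, l ≠ k ∧ lam l ≤ v i ∧ v i ≤ lam k ∧ ∀ j, lam j ≤ lam l ∨ lam k ≤ lam j := by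
  obtain ⟨k, hk, hk_min⟩ := exists_min_image {j | v i ≤ lam j} lam <| by
    simpa [Finset.Nonempty] using h.exists_le i
  replace hk : v i ≤ lam k := (mem_filter.1 hk).2
  obtain ⟨l, hl, hl_max⟩ := exists_max_image {j | j ≠ k ∧ lam j ≤ v i} lam <| by
    simpa [Finset.Nonempty] using h.exists_ne_le hi hk
  obtain ⟨hlk, hl⟩ := (mem_filter.1 hl).2
  refine ⟨k, l, hlk, hl, hk, fun j => ?_⟩
  by_cases hj : v i ≤ lam j
  · exact Or.inr (hk_min j (by simpa using hj))
  · have hjk : j ≠ k := fun hjk => hj (hjk ▸ hk)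
    exact Or.inl (hl_max j (by simpa [hjk] using (not_le.1 hj).le))

end Majorization

variable {ι : Type*} [Fintype ι] [DecidableEq ι]

def IsDiagOfUnitaryConj (lam v : ι → ℝ) : Prop :=
  ∃ U ∈ unitaryGroup ι ℂ, ∀ i, (U * diagonal (fun j => (lam j : ℂ)) * Uᴴ) i i = v i

variable {lam v : ι → ℝ}

lemma IsDiagOfUnitaryConj.of_comp_equiv (σ : ι ≃ ι) (h : IsDiagOfUnitaryConj lam (v ∘ σ)) :
    IsDiagOfUnitaryConj lam v := by
  obtain ⟨U, hU, hdiag⟩ := h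
  refine ⟨U.submatrix σ.symm id, ?_, fun i => ?_⟩
  · rw [mem_unitaryGroup_iff, star_eq_conjTranspose] at hU ⊢
    rw [conjTranspose_submatrix, ← Equiv.coe_refl, submatrix_mul_equiv, hU, submatrix_one_equiv]
  · simpa [mul_apply] using hdiag (σ.symm i)

lemma isDiagOfUnitaryConj_of_subsingleton [Subsingleton ι] (h : ∑ j, v j = ∑ j, lam j) :
    IsDiagOfUnitaryConj lam v := by
  refine ⟨1, one_mem _, fun i => ?_⟩
  rw [Fintype.sum_subsingleton _ i, Fintype.sum_subsingleton _ i] at h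
  simp [h]

lemma exists_unitary_conj_diagonal_eq (lam : ι → ℝ) {k l : ι} (hkl : k ≠ l) {m : ℝ}
    (hl : lam l ≤ m) (hk : m ≤ lam k) :
    ∃ R ∈ unitaryGroup ι ℂ, (R * diagonal (fun j => (lam j : ℂ)) * Rᴴ) k k = m ∧
      (R * diagonal (fun j => (lam j : ℂ)) * Rᴴ).toBlock (· ≠ k) (· ≠ k) =
        diagonal fun j : {j // j ≠ k} => (Function.update lam l (lam k + lam l - m) j : ℂ) := by
  obtain ⟨a, b, ha, hb, hab, hm⟩ := (Convex.mem_Icc (hl.trans hk)).1 ⟨hl, hk⟩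
  have hc : ((√b : ℝ) : ℂ) * (√b : ℝ) = b := by rw [← Complex.ofReal_mul, Real.mul_self_sqrt hb]
  have hs : ((√a : ℝ) : ℂ) * (√a : ℝ) = a := by rw [← Complex.ofReal_mul, Real.mul_self_sqrt ha]
  refine ⟨planeRotation k l √b √a, planeRotation_mem_unitaryGroup hkl ?_, ?_, ?_⟩
  · rw [Real.mul_self_sqrt hb, Real.mul_self_sqrt ha, add_comm, hab]
  · rw [planeRotation_conj_diagonal_apply hkl, if_pos ⟨rfl, rfl⟩, hc, hs, ← hm]
    push_cast
    ring
  · ext i j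
    rw [toBlock_apply, planeRotation_conj_diagonal_apply hkl, if_neg fun h => i.2 h.1]
    split_ifs with h₁ h₂
    · obtain ⟨hi, hj⟩ := h₁
      rw [show i = j from Subtype.ext (hi.trans hj.symm), diagonal_apply_eq, hj,
        Function.update_self, hc, hs, ← hm]
      push_cast
      linear_combination ((lam k : ℂ) + lam l) * (by exact_mod_cast hab : (a : ℂ) + b = 1)
    · exact absurd h₂ (by simp [i.2, j.2])
    · rcases eq_or_ne i j with rfl | hij
      · have hil : (i : ι) ≠ l := fun h => h₁ ⟨h, h⟩
        rw [diagonal_apply_eq, diagonal_apply_eq, Function.update_of_ne hil]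
      · rw [diagonal_apply_ne _ (Subtype.coe_ne_coe.2 hij), diagonal_apply_ne _ hij]

lemma IsDiagOfUnitaryConj.of_conj_toBlock {k : ι} {R : Matrix ι ι ℂ} (hR : R ∈ unitaryGroup ι ℂ)
    {μ : {j // j ≠ k} → ℝ} (hk : (R * diagonal (fun j => (lam j : ℂ)) * Rᴴ) k k = v k)
    (hblock : (R * diagonal (fun j => (lam j : ℂ)) * Rᴴ).toBlock (· ≠ k) (· ≠ k) =
      diagonal fun j => (μ j : ℂ))
    (hμ : IsDiagOfUnitaryConj μ fun j => v j) : IsDiagOfUnitaryConj lam v := by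
  obtain ⟨V, hV, hVdiag⟩ := hμ
  refine ⟨extendByOne V * R, mul_mem (extendByOne_mem_unitaryGroup hV) hR, fun i => ?_⟩
  rw [conjTranspose_mul, ← Matrix.mul_assoc, Matrix.mul_assoc _ R, Matrix.mul_assoc _ (R * _)]
  by_cases hi : i = k
  · subst hi
    rw [extendByOne_conj_apply_of_not V _ (not_not.2 rfl), hk]
  · rw [extendByOne_conj_apply V _ ⟨i, hi⟩ ⟨i, hi⟩, hblock, hVdiag]

theorem IsMajorizedBy.isDiagOfUnitaryConj (h : IsMajorizedBy v lam) :
    IsDiagOfUnitaryConj lam v := by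
  induction hn : Fintype.card ι using Nat.strong_induction_on generalizing ι with
  | _ n ih =>
  rcases subsingleton_or_nontrivial ι with hι | hι
  · exact isDiagOfUnitaryConj_of_subsingleton h.sum_eq
  obtain ⟨i, hi⟩ := Finite.exists_max v
  obtain ⟨k, l, hlk, hl, hk, hgap⟩ := h.exists_bracket hi
  refine .of_comp_equiv (Equiv.swap k i) ?_
  set w := v ∘ Equiv.swap k i
  have hwk : w k = v i := by simp [w]
  have hw : ∀ j, w j ≤ w k := fun j => hwk ▸ hi _
  rw [← hwk] at hl hk
  obtain ⟨R, hR, hRk, hRblock⟩ := exists_unitary_conj_diagonal_eq lam hlk.symm hl hk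
  refine .of_conj_toBlock hR hRk hRblock (ih _ ?_ ?_ rfl)
  · exact hn ▸ Fintype.card_subtype_lt (not_not.2 rfl)
  · exact (h.comp_equiv _).subtype_ne_update hlk hw hgap hl hk

end SchurHorn

/-- Horn's part of the Schur–Horn theorem: every vector in the permutation polytope
of `λ` is the diagonal of `U D U*` for some unitary `U`, where `D = diag(λ)`. -/
theorem exists_unitary_diag_conj_eq_of_mem_permutation_polytope
    (n : ℕ) (lam : Fin n → ℝ) (v : Fin n → ℝ)
    (hv : v ∈ convexHull ℝ {w : Fin n → ℝ | ∃ σ : Equiv.Perm (Fin n), w = lam ∘ σ}) :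
    ∃ U ∈ Matrix.unitaryGroup (Fin n) ℂ,
      ∀ i, (U * Matrix.diagonal (fun j => (lam j : ℂ)) * Uᴴ) i i = (v i : ℂ) :=
  (SchurHorn.isMajorizedBy_of_mem_convexHull hv).isDiagOfUnitaryConj
end

section
/- Let D and D' be n×n real diagonal matrices. Then min_{U ∈ U(n)} ⟨U D U*, D'⟩_F = min_{σ ∈ Sₙ} ⟨P_σ D P_σᵀ, D'⟩_F, where U(n) is the group of n×n unitary matrices, ⟨A,B⟩_F = Tr(AB) is the Frobenius inner product, and P_σ is the permutation matrix of σ ∈ Sₙ. In particular both minima are attained and equal. -/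
/-!
Writing `D = diag d` and `D' = diag d'`, one has `Re Tr(U D Uᴴ D') = d' ⬝ᵥ (|Uᵢⱼ|²) d`, a linear
function of the matrix `(|Uᵢⱼ|²)`, which is doubly stochastic for unitary `U`. By Birkhoff's theorem
the doubly stochastic matrices are the convex hull of the permutation matrices, so this linear
function is minimised at a permutation matrix; and permutation matrices are themselves unitary.
-/

open Matrix

namespace Matrix

variable {n : Type*} [Fintype n] [DecidableEq n]

omit [Fintype n] in
lemma normSq_permMatrix (σ : Equiv.Perm n) :
    (fun i j => Complex.normSq (σ.permMatrix ℂ i j)) = σ.permMatrix ℝ := by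
  ext i j
  simp [Equiv.Perm.permMatrix, PEquiv.toMatrix_apply, apply_ite]

lemma permMatrix_mem_unitaryGroup {R : Type*} [CommRing R] [StarRing R] (σ : Equiv.Perm n) :
    σ.permMatrix R ∈ unitaryGroup n R := by
  rw [mem_unitaryGroup_iff, star_eq_conjTranspose, conjTranspose_permMatrix, ← permMatrix_mul,
    inv_mul_cancel, permMatrix_one]

lemma normSq_mem_doublyStochastic {U : Matrix n n ℂ} (hU : U ∈ unitaryGroup n ℂ) :
    (fun i j => Complex.normSq (U i j)) ∈ doublyStochastic ℝ n := by
  refine mem_doublyStochastic_iff_sum.2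
    ⟨fun i j => Complex.normSq_nonneg _, fun i => ?_, fun j => ?_⟩
  · have := congrArg (fun M => (M i i).re) (mem_unitaryGroup_iff.1 hU)
    simpa [mul_apply, Complex.mul_conj, Complex.re_sum] using this
  · have := congrArg (fun M => (M j j).re) (mem_unitaryGroup_iff'.1 hU)
    simpa [mul_apply, mul_comm (star (U _ j)), Complex.mul_conj, Complex.re_sum,
      Complex.normSq_apply] using this

lemma re_trace_mul_diagonal_mul_conjTranspose_mul_diagonal (U : Matrix n n ℂ) (a b : n → ℝ) :
    (trace (U * diagonal (fun i => (a i : ℂ)) * Uᴴ * diagonal (fun i => (b i : ℂ)))).re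
      = b ⬝ᵥ (fun i j => Complex.normSq (U i j)) *ᵥ a := by
  simp only [trace, diag_apply, mul_apply, diagonal_apply, conjTranspose_apply, dotProduct,
    mulVec, mul_ite, mul_zero, Finset.sum_ite_eq', Finset.mem_univ, if_true, Finset.sum_mul,
    Complex.re_sum, Finset.mul_sum]
  refine Finset.sum_congr rfl fun i _ => Finset.sum_congr rfl fun j _ => ?_
  rw [mul_right_comm (U i j), Complex.star_def, Complex.mul_conj]
  norm_cast
  ring

omit [DecidableEq n] in
lemma concaveOn_dotProduct_mulVec (a b : n → ℝ) {s : Set (Matrix n n ℝ)} (hs : Convex ℝ s) :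
    ConcaveOn ℝ s fun M => b ⬝ᵥ M *ᵥ a :=
  LinearMap.concaveOn
    { toFun := fun M => b ⬝ᵥ M *ᵥ a
      map_add' := fun M N => by simp [add_mulVec, dotProduct_add]
      map_smul' := fun c M => by simp [smul_mulVec, dotProduct_smul] } hs

lemma exists_permMatrix_le_of_concaveOn {f : Matrix n n ℝ → ℝ}
    (hf : ConcaveOn ℝ (doublyStochastic ℝ n) f) {M : Matrix n n ℝ}
    (hM : M ∈ doublyStochastic ℝ n) : ∃ σ : Equiv.Perm n, f (σ.permMatrix ℝ) ≤ f M := by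
  rw [← SetLike.mem_coe, doublyStochastic_eq_convexHull_permMatrix] at hM
  obtain ⟨_, ⟨σ, rfl⟩, hσ⟩ := hf.exists_le_of_mem_convexHull
    (by rintro _ ⟨σ, rfl⟩; exact permMatrix_mem_doublyStochastic) hM
  exact ⟨σ, hσ⟩

end Matrix

/-- For real diagonal matrices `D = diag(d)` and `D' = diag(d')`, the minimum of
`⟨U D U*, D'⟩_F` over the unitary group equals the minimum of
`⟨P_σ D P_σᵀ, D'⟩_F` over the symmetric group; both minima are attained. -/
theorem min_unitaryGroup_eq_min_perm
    (n : ℕ) (d d' : Fin n → ℝ) :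
    ∃ r : ℝ,
      IsLeast {x : ℝ | ∃ U ∈ Matrix.unitaryGroup (Fin n) ℂ,
          x = (Matrix.trace (U * Matrix.diagonal (fun i => (d i : ℂ)) * Uᴴ *
            Matrix.diagonal (fun i => (d' i : ℂ)))).re} r ∧
      IsLeast {x : ℝ | ∃ σ : Equiv.Perm (Fin n),
          x = (Matrix.trace (σ.permMatrix ℂ * Matrix.diagonal (fun i => (d i : ℂ)) *
            (σ.permMatrix ℂ)ᵀ * Matrix.diagonal (fun i => (d' i : ℂ)))).re} r := by
  set f : Matrix (Fin n) (Fin n) ℝ → ℝ := fun M => d' ⬝ᵥ M *ᵥ d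
  obtain ⟨σ₀, hσ₀⟩ := Finite.exists_min fun σ : Equiv.Perm (Fin n) => f (σ.permMatrix ℝ)
  have perm_value (σ : Equiv.Perm (Fin n)) :
      (trace (σ.permMatrix ℂ * diagonal (fun i => (d i : ℂ)) * (σ.permMatrix ℂ)ᴴ *
        diagonal (fun i => (d' i : ℂ)))).re = f (σ.permMatrix ℝ) := by
    rw [re_trace_mul_diagonal_mul_conjTranspose_mul_diagonal, normSq_permMatrix]
  have transpose_eq (σ : Equiv.Perm (Fin n)) : (σ.permMatrix ℂ)ᵀ = (σ.permMatrix ℂ)ᴴ := by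
    rw [transpose_permMatrix, conjTranspose_permMatrix]
  refine ⟨f (σ₀.permMatrix ℝ), ⟨⟨_, permMatrix_mem_unitaryGroup σ₀, (perm_value σ₀).symm⟩, ?_⟩,
    ⟨⟨σ₀, by rw [transpose_eq, perm_value]⟩, ?_⟩⟩
  · rintro _ ⟨U, hU, rfl⟩
    obtain ⟨σ, hσ⟩ := exists_permMatrix_le_of_concaveOn
      (concaveOn_dotProduct_mulVec d d' convex_doublyStochastic)
      (normSq_mem_doublyStochastic hU)
    rw [re_trace_mul_diagonal_mul_conjTranspose_mul_diagonal]
    exact (hσ₀ σ).trans hσ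
  · rintro _ ⟨σ, rfl⟩
    rw [transpose_eq, perm_value]
    exact hσ₀ σ
end

section
/- Let λ₁ < λ₂ < ⋯ < λₙ be real numbers. Then the iterated integral ∫₀¹ ∫₀^{1−x₁} ⋯ ∫₀^{1−x₁−⋯−x_{n−2}} exp(−(λ₁x₁ + ⋯ + λ_{n−1}x_{n−1} + λₙ(1−x₁−⋯−x_{n−1}))) dx_{n−1} ⋯ dx₂ dx₁ equals Σ_{i=1}^{n} e^{−λᵢ} / ∏_{j≠i} (λⱼ − λᵢ). -/
/-!
Integrating out the first coordinate, the slice `x₀ = t` of `{x ≥ 0, ∑ xᵢ ≤ a}` is the same kind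
of simplex in one dimension less, of size `a - t`. Hence, after generalising from size `1` to
size `a`, the integral satisfies `I(μ₀, …, μₖ; a) = ∫₀ᵃ e^{-μ₀ t} I(μ₁, …, μₖ; a - t) dt`, and the
claim follows by induction on the dimension: the elementary integrals
`∫₀ᵃ e^{-μ₀ t} e^{-(a - t) μᵢ} dt = (e^{-a μ₀} - e^{-a μᵢ}) / (μᵢ - μ₀)` reassemble the
partial-fraction sum, the coefficient of `e^{-a μ₀}` being supplied by the identity
`∑ᵢ ∏_{j ≠ i} (μⱼ - μᵢ)⁻¹ = 0`.
-/

open MeasureTheory Finset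

/-- Compare the coefficients of `X ^ (#s - 1)` in the Lagrange interpolation of the constant
polynomial `1` at the nodes `-vᵢ`. -/
theorem sum_inv_prod_erase_sub_eq_zero {ι F : Type*} [Field F] [DecidableEq ι] {s : Finset ι}
    {v : ι → F} (hv : Set.InjOn v s) (hs : 2 ≤ #s) :
    ∑ i ∈ s, (∏ j ∈ s.erase i, (v j - v i))⁻¹ = 0 := by
  have h := Lagrange.coeff_eq_sum (v := fun i => -v i)
    (fun i hi j hj hij => hv hi hj (neg_injective hij)) (P := 1)
    (by rw [Polynomial.degree_one]; exact_mod_cast (by omega : 0 < #s))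
  rw [Polynomial.coeff_one, if_neg (by omega)] at h
  simpa [neg_add_eq_sub] using h.symm

theorem Fin.prod_univ_erase_succ {M : Type*} [CommMonoid M] {k : ℕ} (g : Fin (k + 1) → M)
    (i : Fin k) :
    ∏ j ∈ univ.erase i.succ, g j = g 0 * ∏ j ∈ univ.erase i, g j.succ := by
  rw [Fin.univ_succ, erase_cons_of_ne _ (Fin.succ_ne_zero i).symm, Finset.prod_cons]
  erw [← map_erase, prod_map]
  rfl

theorem sum_sub_div_sub_div_prod_erase_succ {F : Type*} [Field F] {k : ℕ} {μ : Fin (k + 2) → F}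
    (hμ : Function.Injective μ) (c : Fin (k + 2) → F) :
    ∑ i : Fin (k + 1),
        (c 0 - c i.succ) / (μ i.succ - μ 0) / ∏ j ∈ univ.erase i, (μ j.succ - μ i.succ)
      = ∑ m, c m / ∏ j ∈ univ.erase m, (μ j - μ m) := by
  set Q : Fin (k + 2) → F := fun m => ∏ j ∈ univ.erase m, (μ j - μ m)
  have hQ_succ (i : Fin (k + 1)) :
      Q i.succ = (μ 0 - μ i.succ) * ∏ j ∈ univ.erase i, (μ j.succ - μ i.succ) :=
    Fin.prod_univ_erase_succ (fun j => μ j - μ i.succ) i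
  have hQ_sum : (Q 0)⁻¹ + ∑ i : Fin (k + 1), (Q i.succ)⁻¹ = 0 := by
    rw [← Fin.sum_univ_succ (f := fun m => (Q m)⁻¹)]
    exact sum_inv_prod_erase_sub_eq_zero hμ.injOn (by simp)
  calc ∑ i : Fin (k + 1),
        (c 0 - c i.succ) / (μ i.succ - μ 0) / ∏ j ∈ univ.erase i, (μ j.succ - μ i.succ)
      = ∑ i : Fin (k + 1), (c i.succ / Q i.succ - c 0 * (Q i.succ)⁻¹) := by
        refine sum_congr rfl fun i _ => ?_
        rw [hQ_succ, ← neg_sub (μ i.succ), neg_mul, div_neg, inv_neg, div_div]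
        ring
    _ = c 0 / Q 0 + ∑ i : Fin (k + 1), c i.succ / Q i.succ := by
        rw [sum_sub_distrib, ← mul_sum, eq_neg_of_add_eq_zero_right hQ_sum]
        ring
    _ = ∑ m, c m / Q m := (Fin.sum_univ_succ (f := fun m => c m / Q m)).symm

theorem integral_eq_integral_integral_cons {E : Type*} [NormedAddCommGroup E] [NormedSpace ℝ E]
    {k : ℕ} {f : (Fin (k + 1) → ℝ) → E} (hf : Integrable f) :
    ∫ x, f x = ∫ t, ∫ y, f (Fin.cons t y) := by
  have he := (volume_preserving_piFinSuccAbove (fun _ : Fin (k + 1) => ℝ) 0).symm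
  have hfe := (he.integrable_comp_emb (MeasurableEquiv.measurableEmbedding _)).2 hf
  rw [← he.integral_comp', Measure.volume_eq_prod]
  refine (integral_prod _ hfe).trans ?_
  simp [MeasurableEquiv.piFinSuccAbove_symm_apply, Fin.insertNthEquiv, Fin.insertNth_zero']

theorem intervalIntegral_exp_neg_mul_mul_exp_neg_sub_mul {α β : ℝ} (h : α ≠ β) (a : ℝ) :
    ∫ t in (0 : ℝ)..a, Real.exp (-(α * t)) * Real.exp (-((a - t) * β))
      = (Real.exp (-(a * α)) - Real.exp (-(a * β))) / (β - α) := by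
  have hβα : β - α ≠ 0 := sub_ne_zero.2 h.symm
  have h_exp (t : ℝ) : Real.exp (-(α * t)) * Real.exp (-((a - t) * β))
      = Real.exp (-(a * β)) * Real.exp ((β - α) * t) := by
    rw [← Real.exp_add, ← Real.exp_add]; ring_nf
  simp_rw [h_exp]
  rw [intervalIntegral.integral_const_mul, intervalIntegral.integral_comp_mul_left Real.exp hβα,
    integral_exp, mul_zero, Real.exp_zero, smul_eq_mul]
  field_simp
  rw [mul_sub, ← Real.exp_add]
  ring_nf

def cornerSimplex (ι : Type*) [Fintype ι] (a : ℝ) : Set (ι → ℝ) :=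
  {x | (∀ i, 0 ≤ x i) ∧ ∑ i, x i ≤ a}

theorem isCompact_cornerSimplex (ι : Type*) [Fintype ι] (a : ℝ) :
    IsCompact (cornerSimplex ι a) := by
  refine (isCompact_Icc (a := 0) (b := fun _ => a)).of_isClosed_subset ?_ ?_
  · simp only [cornerSimplex, Set.ofPred_and, Set.ofPred_forall]
    exact (isClosed_iInter fun i => isClosed_le continuous_const (continuous_apply i)).inter
      (isClosed_le (by fun_prop) continuous_const)
  · rintro x ⟨hx, hxa⟩
    exact ⟨hx, fun i => (single_le_sum (fun j _ => hx j) (mem_univ i)).trans hxa⟩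

theorem cons_mem_cornerSimplex_iff {k : ℕ} {a t : ℝ} {y : Fin k → ℝ} :
    (Fin.cons t y : Fin (k + 1) → ℝ) ∈ cornerSimplex (Fin (k + 1)) a
      ↔ t ∈ Set.Icc 0 a ∧ y ∈ cornerSimplex (Fin k) (a - t) := by
  simp only [cornerSimplex, Set.mem_ofPred_eq, Set.mem_Icc, Fin.forall_fin_succ, Fin.cons_zero,
    Fin.cons_succ, Fin.sum_cons]
  have hsum_nonneg : (∀ i, 0 ≤ y i) → 0 ≤ ∑ i, y i := fun h => sum_nonneg fun i _ => h i
  constructor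
  · rintro ⟨⟨ht, hy⟩, hsum⟩
    exact ⟨⟨ht, by linarith [hsum_nonneg hy]⟩, hy, by linarith⟩
  · rintro ⟨⟨ht, -⟩, hy, hsum⟩
    exact ⟨⟨ht, hy⟩, by linarith⟩

theorem setIntegral_cornerSimplex_succ {k : ℕ} {f : (Fin (k + 1) → ℝ) → ℝ} (hf : Continuous f)
    {a : ℝ} (ha : 0 ≤ a) :
    ∫ x in cornerSimplex (Fin (k + 1)) a, f x
      = ∫ t in (0 : ℝ)..a, ∫ y in cornerSimplex (Fin k) (a - t), f (Fin.cons t y) := by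
  have hS := (isCompact_cornerSimplex (Fin (k + 1)) a).measurableSet
  rw [← integral_indicator hS,
    integral_eq_integral_integral_cons ((hf.continuousOn.integrableOn_compact
      (isCompact_cornerSimplex _ a)).integrable_indicator hS),
    intervalIntegral.integral_of_le ha, ← integral_Icc_eq_integral_Ioc,
    ← integral_indicator measurableSet_Icc]
  congr 1 with t
  by_cases ht : t ∈ Set.Icc 0 a
  · rw [Set.indicator_of_mem ht,
      ← integral_indicator (isCompact_cornerSimplex (Fin k) (a - t)).measurableSet]
    congr 1 with y
    rw [← Set.indicator_comp_right fun y : Fin k → ℝ => (Fin.cons t y : Fin (k + 1) → ℝ)]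
    congr 1 with y
    exact cons_mem_cornerSimplex_iff.trans (and_iff_right ht)
  · simp [Set.indicator, cons_mem_cornerSimplex_iff, ht]

/-- `exp (-⟨μ, (x, a - ∑ xᵢ)⟩)`: the size-`a` simplex in `ℝ^(k+1)` is parametrised by its first
`k` coordinates. -/
noncomputable def simplexExp {k : ℕ} (μ : Fin (k + 1) → ℝ) (a : ℝ) (x : Fin k → ℝ) : ℝ :=
  Real.exp (-((∑ i, μ i.castSucc * x i) + μ (Fin.last k) * (a - ∑ i, x i)))

theorem continuous_simplexExp {k : ℕ} (μ : Fin (k + 1) → ℝ) (a : ℝ) :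
    Continuous (simplexExp μ a) := by
  unfold simplexExp; fun_prop

theorem simplexExp_cons {k : ℕ} (μ : Fin (k + 2) → ℝ) (a t : ℝ) (y : Fin k → ℝ) :
    simplexExp μ a (Fin.cons t y)
      = Real.exp (-(μ 0 * t)) * simplexExp (fun i => μ i.succ) (a - t) y := by
  simp only [simplexExp, ← Real.exp_add, Fin.sum_univ_succ, Fin.cons_zero,
    Fin.cons_succ, Fin.castSucc_zero, Fin.succ_last, ← Fin.succ_castSucc]
  ring_nf

theorem integral_simplexExp_cornerSimplex {k : ℕ} {μ : Fin (k + 1) → ℝ}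
    (hμ : Function.Injective μ) {a : ℝ} (ha : 0 ≤ a) :
    ∫ x in cornerSimplex (Fin k) a, simplexExp μ a x
      = ∑ i, Real.exp (-(a * μ i)) / ∏ j ∈ univ.erase i, (μ j - μ i) := by
  induction k generalizing a with
  | zero => simp [cornerSimplex, simplexExp, ha, mul_comm, Measure.real, volume_pi]
  | succ k ih =>
    have hμ_succ : Function.Injective fun i : Fin (k + 1) => μ i.succ :=
      hμ.comp (Fin.succ_injective _)
    calc ∫ x in cornerSimplex (Fin (k + 1)) a, simplexExp μ a x
        = ∫ t in (0 : ℝ)..a, ∑ i : Fin (k + 1), Real.exp (-(μ 0 * t)) *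
            Real.exp (-((a - t) * μ i.succ)) / ∏ j ∈ univ.erase i, (μ j.succ - μ i.succ) := by
          rw [setIntegral_cornerSimplex_succ (continuous_simplexExp μ a) ha]
          refine intervalIntegral.integral_congr fun t ht => ?_
          rw [Set.uIcc_of_le ha] at ht
          simp only [simplexExp_cons, integral_const_mul, ih hμ_succ (sub_nonneg.2 ht.2), mul_sum,
            mul_div_assoc]
      _ = ∑ i : Fin (k + 1), (Real.exp (-(a * μ 0)) - Real.exp (-(a * μ i.succ))) /
            (μ i.succ - μ 0) / ∏ j ∈ univ.erase i, (μ j.succ - μ i.succ) := by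
          rw [intervalIntegral.integral_finsetSum fun i _ =>
            (by fun_prop : Continuous _).intervalIntegrable _ _]
          simp only [intervalIntegral.integral_div,
            intervalIntegral_exp_neg_mul_mul_exp_neg_sub_mul (hμ.ne (Fin.succ_ne_zero _).symm)]
      _ = _ := sum_sub_div_sub_div_prod_erase_succ hμ fun m => Real.exp (-(a * μ m))

/-- For distinct reals `λ₁ < ⋯ < λₙ`, the (Lebesgue) integral of
`exp(−(λ₁x₁ + ⋯ + λ_{n−1}x_{n−1} + λₙ(1 − x₁ − ⋯ − x_{n−1})))` over the region
`{x ∈ ℝ^{n−1} : xᵢ ≥ 0, Σᵢ xᵢ ≤ 1}` equals `Σᵢ e^{−λᵢ} / ∏_{j≠i}(λⱼ − λᵢ)`. -/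
theorem integral_exp_simplex_eq_sum
    (n : ℕ) (hn : 1 ≤ n) (lam : Fin n → ℝ) (hmono : StrictMono lam) :
    (∫ x in {x : Fin (n - 1) → ℝ | (∀ i, 0 ≤ x i) ∧ ∑ i, x i ≤ 1},
        Real.exp (-((∑ i : Fin (n - 1), lam (Fin.castLE (by omega) i) * x i) +
          lam ⟨n - 1, by omega⟩ * (1 - ∑ i, x i))))
      = ∑ i, Real.exp (-lam i) / ∏ j ∈ Finset.univ.erase i, (lam j - lam i) := by
  obtain ⟨k, rfl⟩ : ∃ k, n = k + 1 := ⟨n - 1, by omega⟩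
  have h := integral_simplexExp_cornerSimplex hmono.injective (zero_le_one (α := ℝ))
  simp only [one_mul] at h
  exact h
end

section
/- Let n ≥ 2 and let m₁,…,mₙ be nonnegative integers. Then the iterated integral ∫₀¹ ∫₀^{1−x₁} ⋯ ∫₀^{1−x₁−⋯−x_{n−2}} x₁^{m₁} ⋯ x_{n−1}^{m_{n−1}} (1−x₁−⋯−x_{n−1})^{mₙ} dx_{n−1} ⋯ dx₂ dx₁ equals m₁! ⋯ mₙ! / (m₁+⋯+mₙ+n−1)!. -/
/-!
Integrate out the first coordinate `t`. The slice of the solid simplex in `ℝ^(k+1)` at height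
`t ∈ (0, 1)` is `(1 - t)` times the solid simplex in `ℝ^k`, and under the substitution
`y = (1 - t) z` the integrand factors as `t^{m₁} (1 - t)^{m₂ + ⋯ + mₙ}` times the same kind of
integrand in one dimension fewer; the Jacobian contributes `(1 - t)^k`. Hence the integral is a
beta integral `∫₀¹ t^a (1 - t)^b dt = a! b! / (a + b + 1)!` (integration by parts in `b`) times
the integral in dimension `k`, and the factorials telescope.
-/

open MeasureTheory Set Nat

theorem intervalIntegral_pow_mul_one_sub_pow_succ (a b : ℕ) :
    (a + 1 : ℝ) * ∫ x in (0 : ℝ)..1, x ^ a * (1 - x) ^ (b + 1)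
      = (b + 1) * ∫ x in (0 : ℝ)..1, x ^ (a + 1) * (1 - x) ^ b := by
  have hu (x : ℝ) : HasDerivAt (fun x : ℝ => x ^ (a + 1)) ((a + 1) * x ^ a) x := by
    simpa using hasDerivAt_pow (a + 1) x
  have hv (x : ℝ) : HasDerivAt (fun x : ℝ => (1 - x) ^ (b + 1)) (-((b + 1) * (1 - x) ^ b)) x := by
    simpa using ((hasDerivAt_id x).const_sub 1).fun_pow (b + 1)
  have hparts := intervalIntegral.integral_deriv_mul_eq_sub (a := 0) (b := 1)
    (fun x _ => hu x) (fun x _ => hv x) (by apply Continuous.intervalIntegrable; fun_prop)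
    (by apply Continuous.intervalIntegrable; fun_prop)
  simp only [one_pow, sub_self, zero_pow (succ_ne_zero _), mul_zero, zero_mul, sub_zero,
    mul_assoc, mul_neg, mul_left_comm _ ((b : ℝ) + 1)] at hparts
  rw [intervalIntegral.integral_add (by apply Continuous.intervalIntegrable; fun_prop)
    (by apply Continuous.intervalIntegrable; fun_prop), intervalIntegral.integral_neg,
    intervalIntegral.integral_const_mul, intervalIntegral.integral_const_mul] at hparts
  linarith

theorem intervalIntegral_pow_mul_one_sub_pow (a b : ℕ) :
    ∫ x in (0 : ℝ)..1, x ^ a * (1 - x) ^ b = (a ! * b ! : ℝ) / (a + b + 1)! := by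
  induction b generalizing a with
  | zero =>
    simp only [pow_zero, mul_one, integral_pow, one_pow, zero_pow (succ_ne_zero a), sub_zero,
      factorial_zero, add_zero, factorial_succ a]
    push_cast
    field_simp
  | succ b ih =>
    have h := intervalIntegral_pow_mul_one_sub_pow_succ a b
    rw [ih, show a + 1 + b + 1 = a + (b + 1) + 1 by ring, factorial_succ a] at h
    rw [factorial_succ b]
    push_cast at h ⊢
    field_simp at h ⊢
    linear_combination h

theorem integral_fin_succ_eq_integral_cons {α E : Type*} [MeasureSpace α]
    [SigmaFinite (volume : Measure α)] [NormedAddCommGroup E] [NormedSpace ℝ E] {k : ℕ}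
    {f : (Fin (k + 1) → α) → E} (hf : Integrable f) :
    ∫ x, f x = ∫ t, ∫ y, f (Fin.cons t y) := by
  have he := (volume_preserving_piFinSuccAbove (fun _ : Fin (k + 1) => α) 0).symm
  have hcons (z : α × (Fin k → α)) :
      (MeasurableEquiv.piFinSuccAbove (fun _ => α) 0).symm z = Fin.cons z.1 z.2 := by
    simp [MeasurableEquiv.piFinSuccAbove_symm_apply, Fin.insertNthEquiv]
  rw [← he.integral_comp (MeasurableEquiv.measurableEmbedding _), Measure.volume_eq_prod,
    integral_prod]
  · simp only [hcons]
  · rw [← Measure.volume_eq_prod]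
    exact (he.integrable_comp_emb (MeasurableEquiv.measurableEmbedding _)).2 hf

def solidSimplex (k : ℕ) : Set (Fin k → ℝ) := {x | (∀ i, 0 ≤ x i) ∧ ∑ i, x i ≤ 1}

theorem isClosed_solidSimplex (k : ℕ) : IsClosed (solidSimplex k) := by
  rw [solidSimplex, ofPred_and, ofPred_forall]
  exact (isClosed_iInter fun i => isClosed_le continuous_const (continuous_apply i)).inter
    (isClosed_le (continuous_finsetSum _ fun i _ => continuous_apply i) continuous_const)

theorem solidSimplex_subset_pi_Icc (k : ℕ) : solidSimplex k ⊆ univ.pi fun _ => Icc 0 1 :=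
  fun _ ⟨hx, hsum⟩ i _ =>
    ⟨hx i, (Finset.single_le_sum (fun j _ => hx j) (Finset.mem_univ i)).trans hsum⟩

theorem isCompact_solidSimplex (k : ℕ) : IsCompact (solidSimplex k) :=
  (isCompact_univ_pi fun _ => isCompact_Icc).of_isClosed_subset (isClosed_solidSimplex k)
    (solidSimplex_subset_pi_Icc k)

theorem cons_mem_solidSimplex_iff {k : ℕ} (t : ℝ) (y : Fin k → ℝ) :
    Fin.cons t y ∈ solidSimplex (k + 1) ↔ 0 ≤ t ∧ (∀ i, 0 ≤ y i) ∧ t + ∑ i, y i ≤ 1 := by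
  simp only [solidSimplex, mem_ofPred_eq, Fin.forall_fin_succ, Fin.cons_zero, Fin.cons_succ,
    Fin.sum_univ_succ, and_assoc]

theorem cons_smul_mem_solidSimplex_iff {k : ℕ} {t : ℝ} (ht : t ∈ Ioo 0 1) (z : Fin k → ℝ) :
    Fin.cons t ((1 - t) • z) ∈ solidSimplex (k + 1) ↔ z ∈ solidSimplex k := by
  have hpos : 0 < 1 - t := sub_pos.2 ht.2
  rw [cons_mem_solidSimplex_iff]
  simp only [Pi.smul_apply, smul_eq_mul, ← Finset.mul_sum, ht.1.le, true_and, solidSimplex,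
    mem_ofPred_eq, mul_nonneg_iff_of_pos_left hpos]
  constructor <;> rintro ⟨hz, hsum⟩ <;> refine ⟨hz, ?_⟩ <;> nlinarith

def simplexMonomial {k : ℕ} (e : Fin (k + 1) → ℕ) (x : Fin k → ℝ) : ℝ :=
  (∏ i, x i ^ e i.castSucc) * (1 - ∑ i, x i) ^ e (Fin.last k)

theorem continuous_simplexMonomial {k : ℕ} (e : Fin (k + 1) → ℕ) :
    Continuous (simplexMonomial e) := by
  unfold simplexMonomial; fun_prop

theorem simplexMonomial_cons_smul {k : ℕ} (e : Fin (k + 2) → ℕ) (t : ℝ) (z : Fin k → ℝ) :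
    simplexMonomial e (Fin.cons t ((1 - t) • z))
      = t ^ e 0 * (1 - t) ^ (∑ i, Fin.tail e i) * simplexMonomial (Fin.tail e) z := by
  have hsum : 1 - (t + ∑ i, (1 - t) * z i) = (1 - t) * (1 - ∑ i, z i) := by
    rw [← Finset.mul_sum]; ring
  have hexp : ∑ i, Fin.tail e i = ∑ i : Fin k, e i.succ.castSucc + e (Fin.last (k + 1)) := by
    rw [Fin.sum_univ_castSucc]; rfl
  rw [hexp]
  simp only [simplexMonomial, Fin.prod_univ_succ, Fin.sum_univ_succ, Fin.cons_zero, Fin.cons_succ,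
    Pi.smul_apply, smul_eq_mul, hsum, mul_pow, Finset.prod_mul_distrib, Finset.prod_pow_eq_pow_sum,
    pow_add, Fin.tail, Fin.succ_castSucc, Fin.succ_last, Fin.castSucc_zero]
  ring

theorem integral_cons_indicator_simplexMonomial {k : ℕ} (e : Fin (k + 2) → ℕ) {t : ℝ}
    (ht : t ∈ Ioo 0 1) :
    ∫ y, (solidSimplex (k + 1)).indicator (simplexMonomial e) (Fin.cons t y)
      = t ^ e 0 * (1 - t) ^ (∑ i, Fin.tail e i + k)
          * ∫ z in solidSimplex k, simplexMonomial (Fin.tail e) z := by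
  have hpos : 0 < 1 - t := sub_pos.2 ht.2
  set G := (solidSimplex (k + 1)).indicator (simplexMonomial e) with hG
  have hfiber (z : Fin k → ℝ) :
      G (Fin.cons t ((1 - t) • z))
        = t ^ e 0 * (1 - t) ^ (∑ i, Fin.tail e i)
          * (solidSimplex k).indicator (simplexMonomial (Fin.tail e)) z := by
    by_cases hz : z ∈ solidSimplex k
    · rw [hG, indicator_of_mem ((cons_smul_mem_solidSimplex_iff ht z).2 hz), indicator_of_mem hz,
        simplexMonomial_cons_smul]
    · rw [hG, indicator_of_notMem (mt (cons_smul_mem_solidSimplex_iff ht z).1 hz),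
        indicator_of_notMem hz, mul_zero]
  have hscale : ∫ z : Fin k → ℝ, G (Fin.cons t ((1 - t) • z))
      = ((1 - t) ^ k)⁻¹ * ∫ y, G (Fin.cons t y) := by
    have := Measure.integral_comp_smul_of_nonneg volume (fun y => G (Fin.cons t y)) (1 - t)
      (hR := hpos.le)
    rw [Module.finrank_fin_fun, smul_eq_mul] at this
    exact this
  simp only [hfiber, integral_const_mul,
    integral_indicator (isClosed_solidSimplex k).measurableSet] at hscale
  rw [eq_inv_mul_iff_mul_eq₀ (by positivity)] at hscale
  rw [← hscale, pow_add]
  ring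

theorem integrable_indicator_simplexMonomial {k : ℕ} (e : Fin (k + 1) → ℕ) :
    Integrable ((solidSimplex k).indicator (simplexMonomial e)) :=
  ((continuous_simplexMonomial e).continuousOn.integrableOn_compact
    (isCompact_solidSimplex k)).integrable_indicator (isClosed_solidSimplex k).measurableSet

theorem integral_simplexMonomial (k : ℕ) (e : Fin (k + 1) → ℕ) :
    ∫ x in solidSimplex k, simplexMonomial e x = (∏ i, ((e i)! : ℝ)) / (∑ i, e i + k)! := by
  induction k with
  | zero =>
    have huniv : solidSimplex 0 = univ := by ext x; simp [solidSimplex]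
    simp [huniv, simplexMonomial, measureReal_def, volume_pi, factorial_ne_zero]
  | succ k ih =>
    set G := (solidSimplex (k + 1)).indicator (simplexMonomial e)
    have hvanish (t : ℝ) (ht : t ∉ Icc 0 1) : ∫ y, G (Fin.cons t y) = 0 := by
      refine integral_eq_zero_of_ae (.of_forall fun _ => indicator_of_notMem (fun hmem => ht ?_) _)
      simpa using solidSimplex_subset_pi_Icc _ hmem 0 (mem_univ 0)
    calc ∫ x in solidSimplex (k + 1), simplexMonomial e x
        = ∫ t in Ioo 0 1, ∫ y, G (Fin.cons t y) := by
          rw [← integral_indicator (isClosed_solidSimplex _).measurableSet,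
            integral_fin_succ_eq_integral_cons (integrable_indicator_simplexMonomial e),
            ← setIntegral_eq_integral_of_forall_compl_eq_zero hvanish, integral_Icc_eq_integral_Ioo]
      _ = (∫ t in (0 : ℝ)..1, t ^ e 0 * (1 - t) ^ (∑ i, Fin.tail e i + k))
            * ∫ z in solidSimplex k, simplexMonomial (Fin.tail e) z := by
          rw [setIntegral_congr_fun measurableSet_Ioo
              fun t ht => integral_cons_indicator_simplexMonomial e ht,
            integral_mul_const, intervalIntegral.integral_of_le zero_le_one,
            integral_Ioc_eq_integral_Ioo]
      _ = (∏ i, ((e i)! : ℝ)) / (∑ i, e i + (k + 1))! := by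
          rw [intervalIntegral_pow_mul_one_sub_pow, ih,
            Fin.prod_univ_succ fun i => ((e i)! : ℝ), Fin.sum_univ_succ e]
          simp only [Fin.tail, add_assoc]
          field_simp

/-- For `n ≥ 2` and nonnegative integers `m₁,…,mₙ`, the (Lebesgue) integral of
`x₁^{m₁} ⋯ x_{n−1}^{m_{n−1}} (1 − x₁ − ⋯ − x_{n−1})^{mₙ}` over the region
`{x ∈ ℝ^{n−1} : xᵢ ≥ 0, Σᵢ xᵢ ≤ 1}` equals `m₁!⋯mₙ!/(m₁+⋯+mₙ+n−1)!`. -/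
theorem integral_monomial_simplex
    (n : ℕ) (hn : 2 ≤ n) (m : Fin n → ℕ) :
    (∫ x in {x : Fin (n - 1) → ℝ | (∀ i, 0 ≤ x i) ∧ ∑ i, x i ≤ 1},
        (∏ i : Fin (n - 1), x i ^ m (Fin.castLE (by omega) i)) *
          (1 - ∑ i, x i) ^ m ⟨n - 1, by omega⟩)
      = (∏ i, (Nat.factorial (m i) : ℝ)) /
          (Nat.factorial ((∑ i, m i) + n - 1) : ℝ) := by
  obtain ⟨k, rfl⟩ : ∃ k, n = k + 1 := ⟨n - 1, by omega⟩
  exact integral_simplexMonomial k m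
end
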